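/- The discrete random variable R taking values θ and π/√2 − θ each with probability 1/2, where θ = arccos(−1/3)/(2√2), satisfies E[cos(√2 R)] = 0 and E[cos(2√2 R)] = −1/3 (and hence P_3 has uniform average mixing under R). -/
import Mathlib


open Matrix MeasureTheory Real
open scoped Matrix ENNReal

noncomputable section

/-- Spectral projection of `A(P₃)` for the eigenvalue `√2`. -/
def Ep : Matrix (Fin 3) (Fin 3) ℝ :=
  (1 / 4 : ℝ) • !![1, Real.sqrt 2, 1; Real.sqrt 2, 2, Real.sqrt 2; 1, Real.sqrt 2, 1]

/-- Spectral projection of `A(P₃)` for the eigenvalue `0`. -/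
def Ez : Matrix (Fin 3) (Fin 3) ℝ :=
  (1 / 2 : ℝ) • !![1, 0, -1; 0, 0, 0; -1, 0, 1]

/-- Spectral projection of `A(P₃)` for the eigenvalue `-√2`. -/
def Em : Matrix (Fin 3) (Fin 3) ℝ :=
  (1 / 4 : ℝ) • !![1, -Real.sqrt 2, 1; -Real.sqrt 2, 2, -Real.sqrt 2; 1, -Real.sqrt 2, 1]

/-- The average mixing matrix of `P₃` under a sampling distribution `μ`. -/
def ammP3 (μ : Measure ℝ) : Matrix (Fin 3) (Fin 3) ℝ :=
  Ep ⊙ Ep + Ez ⊙ Ez + Em ⊙ Em +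
    (2 * ∫ t, Real.cos (Real.sqrt 2 * t) ∂μ) • (Ep ⊙ Ez) +
    (2 * ∫ t, Real.cos (Real.sqrt 2 * t) ∂μ) • (Ez ⊙ Em) +
    (2 * ∫ t, Real.cos (2 * Real.sqrt 2 * t) ∂μ) • (Ep ⊙ Em)

/-- The angle `θ = arccos (-1/3) / (2√2)`. -/
def thetaP3 : ℝ := Real.arccos (-(1 / 3)) / (2 * Real.sqrt 2)

/-- The two-point distribution taking values `θ` and `π/√2 - θ`, each with
probability `1/2`. -/
def muP3 : Measure ℝ :=
  (1 / 2 : ℝ≥0∞) • Measure.dirac thetaP3 +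
    (1 / 2 : ℝ≥0∞) • Measure.dirac (π / Real.sqrt 2 - thetaP3)


lemma integrable_dirac' {f : ℝ → ℝ} (hf : Measurable f) (a : ℝ) :
    Integrable f (Measure.dirac a) :=
  ⟨hf.aestronglyMeasurable, by simp [HasFiniteIntegral, lintegral_dirac]⟩

lemma muP3_integral (f : ℝ → ℝ) (hf : Measurable f) :
    ∫ t, f t ∂muP3 = (f thetaP3 + f (π / Real.sqrt 2 - thetaP3)) / 2 := by
  have h1 : Integrable f ((1 / 2 : ℝ≥0∞) • Measure.dirac thetaP3) := by
    rw [integrable_smul_measure (by norm_num) (by norm_num)]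
    exact integrable_dirac' hf _
  have h2 : Integrable f ((1 / 2 : ℝ≥0∞) • Measure.dirac (π / Real.sqrt 2 - thetaP3)) := by
    rw [integrable_smul_measure (by norm_num) (by norm_num)]
    exact integrable_dirac' hf _
  rw [muP3, integral_add_measure h1 h2, integral_smul_measure, integral_smul_measure,
    integral_dirac, integral_dirac]
  simp [ENNReal.toReal_div]
  ring

lemma s2' : Real.sqrt 2 ≠ 0 := by positivity

lemma ht1' : Real.sqrt 2 * thetaP3 = Real.arccos (-(1 / 3)) / 2 := by
  rw [thetaP3]; field_simp

lemma ht2' : Real.sqrt 2 * (π / Real.sqrt 2 - thetaP3) = π - Real.arccos (-(1 / 3)) / 2 := by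
  rw [mul_sub, mul_div_cancel₀ _ s2', ht1']

lemma ht3' : 2 * Real.sqrt 2 * thetaP3 = Real.arccos (-(1 / 3)) := by
  rw [thetaP3]; field_simp

lemma ht4' : 2 * Real.sqrt 2 * (π / Real.sqrt 2 - thetaP3) = 2 * π - Real.arccos (-(1 / 3)) := by
  rw [mul_sub, ht3']
  have : Real.sqrt 2 * (π / Real.sqrt 2) = π := mul_div_cancel₀ _ s2'
  nlinarith [this]

lemma int1' : (∫ t, Real.cos (Real.sqrt 2 * t) ∂muP3) = 0 := by
  rw [muP3_integral _ (by fun_prop), ht1', ht2', Real.cos_pi_sub]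
  ring

lemma int2' : (∫ t, Real.cos (2 * Real.sqrt 2 * t) ∂muP3) = -(1 / 3) := by
  rw [muP3_integral _ (by fun_prop), ht3', ht4', Real.cos_sub, Real.cos_two_pi,
    Real.sin_two_pi, Real.cos_arccos (by norm_num) (by norm_num)]
  ring

/-- the discrete random variable taking values `θ` and `π/√2 - θ` each
with probability `1/2`, where `θ = arccos (-1/3)/(2√2)`, satisfies
`E[cos (√2 R)] = 0` and `E[cos (2√2 R)] = -1/3`; hence `P₃` has uniform average mixing
under it. -/
theorem uniform_average_mixing_P3_dirac :
    IsProbabilityMeasure muP3 ∧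
      (∫ t, Real.cos (Real.sqrt 2 * t) ∂muP3) = 0 ∧
      (∫ t, Real.cos (2 * Real.sqrt 2 * t) ∂muP3) = -(1 / 3) ∧
      ammP3 muP3 = (1 / 3 : ℝ) • Matrix.of fun _ _ => (1 : ℝ) := by
  refine ⟨?_, int1', int2', ?_⟩
  · constructor
    simp [muP3]
    exact ENNReal.inv_two_add_inv_two
  · rw [ammP3, int1', int2']
    have hs : Real.sqrt 2 * Real.sqrt 2 = 2 := Real.mul_self_sqrt (by norm_num)
    ext i j
    fin_cases i <;> fin_cases j <;>
      simp [Ep, Ez, Em, Matrix.hadamard, Matrix.add_apply, Matrix.smul_apply] <;>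
      nlinarith [hs]

end
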